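/- arXiv:1302.2018 — 2 statements merged into one kernel-verified Lean document; each statement's English description precedes it below -/
import Mathlib

section
/- Let p ≥ 2 be an integer, λ ∈ (1/2, 1], and let F be a polyharmonic mapping of class HS_p(λ) on the unit disk 𝔻. Then for every z ∈ 𝔻, (1 − |b_{1,1}|)|z| − ((1 − |b_{1,1}| − 3(|a_{1,2}| + |b_{1,2}|))/(2(1+λ)))|z|² − (|a_{1,2}| + |b_{1,2}|)|z|³ ≤ |F(z)| ≤ (1 + |b_{1,1}|)|z| + ((1 − |b_{1,1}| − 3(|a_{1,2}| + |b_{1,2}|))/(2(1+λ)))|z|² + (|a_{1,2}| + |b_{1,2}|)|z|³. -/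
open Complex Metric Set

/-- The polyharmonic mapping associated to coefficients `a b : ℕ → ℕ → ℂ`
(`a n k` is the coefficient `a_{n,k}`):
`F(z) = Σ_{k=1}^p |z|^{2(k-1)} Σ_{n=1}^∞ (a_{n,k} z^n + conj(b_{n,k}) conj(z)^n)`. -/
noncomputable def polyF (p : ℕ) (a b : ℕ → ℕ → ℂ) (z : ℂ) : ℂ :=
  ∑ k ∈ Finset.Icc 1 p, ((‖z‖ : ℂ)) ^ (2 * (k - 1)) *
    ∑' n : ℕ, if 1 ≤ n then
      a n k * z ^ n + (starRingEnd ℂ) (b n k) * ((starRingEnd ℂ) z) ^ n else 0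

/-- The coefficient conditions defining the class `HS_p(λ)`. -/
def HSLam (p : ℕ) (lam : ℝ) (a b : ℕ → ℕ → ℂ) : Prop :=
  a 1 1 = 1 ∧
  (∀ k ∈ Finset.Icc 1 p,
    Summable (fun n : ℕ => ‖a n k‖ + ‖b n k‖)) ∧
  (∀ k ∈ Finset.Icc 1 p, Summable (fun n : ℕ =>
    if 2 ≤ n then (2 * ((k : ℝ) - 1) + n * (lam * n + 1 - lam)) *
      (‖a n k‖ + ‖b n k‖) else 0)) ∧
  (∑ k ∈ Finset.Icc 1 p, ∑' n : ℕ,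
      (if 2 ≤ n then (2 * ((k : ℝ) - 1) + n * (lam * n + 1 - lam)) *
        (‖a n k‖ + ‖b n k‖) else 0))
    ≤ 2 - ∑ k ∈ Finset.Icc 1 p,
        (2 * (k : ℝ) - 1) * (‖a 1 k‖ + ‖b 1 k‖) ∧
  1 ≤ ∑ k ∈ Finset.Icc 1 p,
        (2 * (k : ℝ) - 1) * (‖a 1 k‖ + ‖b 1 k‖) ∧
  ∑ k ∈ Finset.Icc 1 p,
        (2 * (k : ℝ) - 1) * (‖a 1 k‖ + ‖b 1 k‖) < 2

/-!
Split `F(z) - z` into the co-analytic part `conj b₁₁ · conj z` of the leading term, the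
cubic term `|z|² (a₁₂ z + conj b₁₂ conj z)`, and a remainder. Every monomial of the
remainder is at most `|z|²` times its coefficient weight `|a_{n,k}| + |b_{n,k}|`, and in
the `HS_p(λ)` condition each of those weights carries a factor at least `2(1 + λ)`
(for `n ≥ 2` the factor `2(k-1) + n(λn + 1 - λ)`, for `n = 1`, `k ≥ 3` the factor
`2k - 1`). Hence the remainder is at most
`(1 - |b₁₁| - 3(|a₁₂| + |b₁₂|)) / (2(1 + λ)) · |z|²`, and both bounds follow from
`| |F(z)| - |z| | ≤ |F(z) - z|`.
-/

open ComplexConjugate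

noncomputable def coeffNorm (a b : ℕ → ℕ → ℂ) (n k : ℕ) : ℝ :=
  ‖a n k‖ + ‖b n k‖

noncomputable def coeffTailSum (a b : ℕ → ℕ → ℂ) (k : ℕ) : ℝ :=
  ∑' n, if 2 ≤ n then coeffNorm a b n k else 0

noncomputable def higherCoeffSum (p : ℕ) (a b : ℕ → ℕ → ℂ) : ℝ :=
  (∑ k ∈ Finset.Icc 3 p, coeffNorm a b 1 k) + ∑ k ∈ Finset.Icc 1 p, coeffTailSum a b k

noncomputable def layerTerm (a b : ℕ → ℕ → ℂ) (z : ℂ) (n k : ℕ) : ℂ :=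
  a n k * z ^ n + conj (b n k) * conj z ^ n

noncomputable def layerTail (a b : ℕ → ℕ → ℂ) (z : ℂ) (k : ℕ) : ℂ :=
  ∑' n, if 2 ≤ n then layerTerm a b z n k else 0

theorem coeffNorm_nonneg (a b : ℕ → ℕ → ℂ) (n k : ℕ) : 0 ≤ coeffNorm a b n k :=
  add_nonneg (norm_nonneg _) (norm_nonneg _)

theorem norm_layerTerm_le (a b : ℕ → ℕ → ℂ) (z : ℂ) (n k : ℕ) :
    ‖layerTerm a b z n k‖ ≤ coeffNorm a b n k * ‖z‖ ^ n := by
  calc ‖layerTerm a b z n k‖ ≤ ‖a n k * z ^ n‖ + ‖conj (b n k) * conj z ^ n‖ := norm_add_le _ _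
    _ = coeffNorm a b n k * ‖z‖ ^ n := by
      simp only [coeffNorm, norm_mul, norm_pow, norm_conj]; ring

theorem Finset.sum_Icc_one_eq_add_add_sum_Icc_three {M : Type*} [AddCommMonoid M]
    {p : ℕ} (hp : 2 ≤ p) (f : ℕ → M) :
    ∑ k ∈ Finset.Icc 1 p, f k = f 1 + f 2 + ∑ k ∈ Finset.Icc 3 p, f k := by
  rw [← insert_Icc_add_one_left_eq_Icc (by omega : 1 ≤ p),
    ← insert_Icc_add_one_left_eq_Icc (by omega : 1 + 1 ≤ p), Finset.sum_insert (by simp),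
    Finset.sum_insert (by simp), ← add_assoc]
  rfl

theorem tsum_ite_one_le_eq_add_tsum_ite_two_le {E : Type*} [AddCommMonoid E] [TopologicalSpace E]
    [ContinuousAdd E] [T2Space E] {f : ℕ → E} (hf : Summable fun n ↦ if 2 ≤ n then f n else 0) :
    (∑' n, if 1 ≤ n then f n else 0) = f 1 + ∑' n, if 2 ≤ n then f n else 0 := by
  have hsplit : ∀ n : ℕ, (if 1 ≤ n then f n else 0) =
      (if n = 1 then f 1 else 0) + if 2 ≤ n then f n else 0 := by
    rintro (_ | _ | n) <;> simp
  rw [tsum_congr hsplit, Summable.tsum_add (hasSum_ite_eq 1 _).summable hf, tsum_ite_eq]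

section Tail

variable {a b : ℕ → ℕ → ℂ} {k : ℕ}

theorem summable_ite_two_le_coeffNorm (hsum : Summable fun n ↦ coeffNorm a b n k) :
    Summable fun n ↦ if 2 ≤ n then coeffNorm a b n k else 0 :=
  hsum.of_nonneg_of_le (fun n ↦ by split_ifs <;> simp [coeffNorm_nonneg])
    (fun n ↦ by split_ifs <;> simp [coeffNorm_nonneg])

theorem norm_layerTail_le {z : ℂ} (hz : ‖z‖ ≤ 1) (hsum : Summable fun n ↦ coeffNorm a b n k) :
    ‖layerTail a b z k‖ ≤ ‖z‖ ^ 2 * coeffTailSum a b k := by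
  refine tsum_of_norm_bounded ((summable_ite_two_le_coeffNorm hsum).hasSum.mul_left _) fun n ↦ ?_
  split_ifs with hn
  · calc ‖layerTerm a b z n k‖ ≤ coeffNorm a b n k * ‖z‖ ^ n := norm_layerTerm_le ..
      _ ≤ coeffNorm a b n k * ‖z‖ ^ 2 :=
        mul_le_mul_of_nonneg_left (pow_le_pow_of_le_one (norm_nonneg z) hz hn) (coeffNorm_nonneg ..)
      _ = _ := mul_comm ..
  · simp

theorem summable_ite_two_le_layerTerm {z : ℂ} (hz : ‖z‖ ≤ 1)
    (hsum : Summable fun n ↦ coeffNorm a b n k) :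
    Summable fun n ↦ if 2 ≤ n then layerTerm a b z n k else 0 := by
  refine (summable_ite_two_le_coeffNorm hsum).of_norm_bounded fun n ↦ ?_
  split_ifs
  · exact (norm_layerTerm_le ..).trans
      (mul_le_of_le_one_right (coeffNorm_nonneg ..) (pow_le_one₀ (norm_nonneg z) hz))
  · simp

end Tail

theorem polyF_eq_sum_add_sum {p : ℕ} {a b : ℕ → ℕ → ℂ} {z : ℂ} (hz : ‖z‖ ≤ 1)
    (hsum : ∀ k ∈ Finset.Icc 1 p, Summable fun n ↦ coeffNorm a b n k) :
    polyF p a b z = ∑ k ∈ Finset.Icc 1 p, (‖z‖ : ℂ) ^ (2 * (k - 1)) * layerTerm a b z 1 k +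
      ∑ k ∈ Finset.Icc 1 p, (‖z‖ : ℂ) ^ (2 * (k - 1)) * layerTail a b z k := by
  rw [← Finset.sum_add_distrib]
  refine Finset.sum_congr rfl fun k hk ↦ ?_
  rw [← mul_add]
  congr 1
  exact tsum_ite_one_le_eq_add_tsum_ite_two_le (summable_ite_two_le_layerTerm hz (hsum k hk))

theorem norm_ofReal_pow_mul_layerTerm_one_le (a b : ℕ → ℕ → ℂ) (z : ℂ) (m k : ℕ) :
    ‖(‖z‖ : ℂ) ^ m * layerTerm a b z 1 k‖ ≤ coeffNorm a b 1 k * ‖z‖ ^ (m + 1) := by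
  rw [norm_mul, norm_pow, Complex.norm_real, norm_norm, pow_succ]
  calc ‖z‖ ^ m * ‖layerTerm a b z 1 k‖ ≤ ‖z‖ ^ m * (coeffNorm a b 1 k * ‖z‖ ^ 1) :=
        mul_le_mul_of_nonneg_left (norm_layerTerm_le ..) (by positivity)
    _ = coeffNorm a b 1 k * (‖z‖ ^ m * ‖z‖) := by ring

theorem norm_polyF_sub_self_le {p : ℕ} (hp : 2 ≤ p) {a b : ℕ → ℕ → ℂ} (ha : a 1 1 = 1)
    (hsum : ∀ k ∈ Finset.Icc 1 p, Summable fun n ↦ coeffNorm a b n k) {z : ℂ} (hz : ‖z‖ ≤ 1) :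
    ‖polyF p a b z - z‖ ≤
      ‖b 1 1‖ * ‖z‖ + coeffNorm a b 1 2 * ‖z‖ ^ 3 + higherCoeffSum p a b * ‖z‖ ^ 2 := by
  have hdecomp : polyF p a b z - z = conj (b 1 1) * conj z + (‖z‖ : ℂ) ^ 2 * layerTerm a b z 1 2 +
      ∑ k ∈ Finset.Icc 3 p, (‖z‖ : ℂ) ^ (2 * (k - 1)) * layerTerm a b z 1 k +
      ∑ k ∈ Finset.Icc 1 p, (‖z‖ : ℂ) ^ (2 * (k - 1)) * layerTail a b z k := by
    rw [polyF_eq_sum_add_sum hz hsum, Finset.sum_Icc_one_eq_add_add_sum_Icc_three hp]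
    simp only [layerTerm, ha]
    ring
  have hhead : ‖∑ k ∈ Finset.Icc 3 p, (‖z‖ : ℂ) ^ (2 * (k - 1)) * layerTerm a b z 1 k‖ ≤
      ‖z‖ ^ 2 * ∑ k ∈ Finset.Icc 3 p, coeffNorm a b 1 k := by
    rw [Finset.mul_sum]
    refine (norm_sum_le _ _).trans (Finset.sum_le_sum fun k hk ↦ ?_)
    have hexp : 2 ≤ 2 * (k - 1) + 1 := by grind
    calc _ ≤ coeffNorm a b 1 k * ‖z‖ ^ (2 * (k - 1) + 1) := norm_ofReal_pow_mul_layerTerm_one_le ..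
      _ ≤ coeffNorm a b 1 k * ‖z‖ ^ 2 := mul_le_mul_of_nonneg_left
          (pow_le_pow_of_le_one (norm_nonneg z) hz hexp) (coeffNorm_nonneg ..)
      _ = _ := mul_comm ..
  have htail : ‖∑ k ∈ Finset.Icc 1 p, (‖z‖ : ℂ) ^ (2 * (k - 1)) * layerTail a b z k‖ ≤
      ‖z‖ ^ 2 * ∑ k ∈ Finset.Icc 1 p, coeffTailSum a b k := by
    rw [Finset.mul_sum]
    refine (norm_sum_le _ _).trans (Finset.sum_le_sum fun k hk ↦ ?_)
    rw [norm_mul, norm_pow, Complex.norm_real, norm_norm]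
    exact (mul_le_of_le_one_left (norm_nonneg _) (pow_le_one₀ (norm_nonneg z) hz)).trans
      (norm_layerTail_le hz (hsum k hk))
  rw [hdecomp, higherCoeffSum]
  refine norm_add₄_le.trans ?_
  have hcubic : ‖(‖z‖ : ℂ) ^ 2 * layerTerm a b z 1 2‖ ≤ coeffNorm a b 1 2 * ‖z‖ ^ 3 :=
    norm_ofReal_pow_mul_layerTerm_one_le ..
  rw [norm_mul, Complex.norm_conj, Complex.norm_conj]
  linarith

theorem two_mul_one_add_le_weight {lam k n : ℝ} (hlam : 0 ≤ lam) (hk : 1 ≤ k) (hn : 2 ≤ n) :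
    2 * (1 + lam) ≤ 2 * (k - 1) + n * (lam * n + 1 - lam) := by
  -- the difference is `2(k - 1) + (n - 2)(λ(n + 1) + 1)`
  nlinarith [mul_nonneg (sub_nonneg.2 hn) (by positivity : 0 ≤ lam * (n + 1) + 1)]

theorem HSLam.higherCoeffSum_le {p : ℕ} {lam : ℝ} {a b : ℕ → ℕ → ℂ} (hF : HSLam p lam a b)
    (hp : 2 ≤ p) (hlam0 : 0 ≤ lam) (hlam1 : lam ≤ 3 / 2) :
    higherCoeffSum p a b ≤ (1 - ‖b 1 1‖ - 3 * (‖a 1 2‖ + ‖b 1 2‖)) / (2 * (1 + lam)) := by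
  obtain ⟨ha, hsum, hsumW, hle, -, -⟩ := hF
  have htail : ∀ k ∈ Finset.Icc 1 p, 2 * (1 + lam) * coeffTailSum a b k ≤
      ∑' n : ℕ, (if 2 ≤ n then (2 * ((k : ℝ) - 1) + n * (lam * n + 1 - lam)) *
        (‖a n k‖ + ‖b n k‖) else 0) := by
    intro k hk
    rw [coeffTailSum, ← tsum_mul_left]
    refine Summable.tsum_le_tsum (fun n ↦ ?_)
      ((summable_ite_two_le_coeffNorm (hsum k hk)).mul_left _) (hsumW k hk)
    split_ifs with hn
    · exact mul_le_mul_of_nonneg_right (two_mul_one_add_le_weight hlam0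
        (mod_cast (Finset.mem_Icc.1 hk).1) (mod_cast hn)) (coeffNorm_nonneg ..)
    · simp
  have hhead : ∀ k ∈ Finset.Icc 3 p,
      2 * (1 + lam) * coeffNorm a b 1 k ≤ (2 * (k : ℝ) - 1) * (‖a 1 k‖ + ‖b 1 k‖) := by
    intro k hk
    have hk3 : (3 : ℝ) ≤ k := mod_cast (Finset.mem_Icc.1 hk).1
    exact mul_le_mul_of_nonneg_right (by linarith) (coeffNorm_nonneg ..)
  have hsplit := Finset.sum_Icc_one_eq_add_add_sum_Icc_three hp
    fun k ↦ (2 * (k : ℝ) - 1) * (‖a 1 k‖ + ‖b 1 k‖)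
  simp only [ha, norm_one, Nat.cast_one, Nat.cast_ofNat] at hsplit
  rw [le_div_iff₀ (by positivity), mul_comm, higherCoeffSum, mul_add, Finset.mul_sum,
    Finset.mul_sum]
  linarith [Finset.sum_le_sum htail, Finset.sum_le_sum hhead]

/-- Distortion bounds for mappings in `HS_p(λ)`, `1/2 < λ ≤ 1`, `p ≥ 2`. -/
theorem distortion_bounds_large_lambda
    (p : ℕ) (hp : 2 ≤ p) (lam : ℝ) (hlam : lam ∈ Set.Ioc (1 / 2 : ℝ) 1)
    (a b : ℕ → ℕ → ℂ) (hF : HSLam p lam a b) :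
    ∀ z ∈ Metric.ball (0 : ℂ) 1,
      (1 - ‖b 1 1‖) * ‖z‖ -
          (1 - ‖b 1 1‖ - 3 * (‖a 1 2‖ + ‖b 1 2‖)) /
            (2 * (1 + lam)) * ‖z‖ ^ 2 -
          (‖a 1 2‖ + ‖b 1 2‖) * ‖z‖ ^ 3
        ≤ ‖polyF p a b z‖ ∧
      ‖polyF p a b z‖
        ≤ (1 + ‖b 1 1‖) * ‖z‖ +
          (1 - ‖b 1 1‖ - 3 * (‖a 1 2‖ + ‖b 1 2‖)) /
            (2 * (1 + lam)) * ‖z‖ ^ 2 +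
          (‖a 1 2‖ + ‖b 1 2‖) * ‖z‖ ^ 3 := by
  intro z hz
  have hz1 : ‖z‖ ≤ 1 := (mem_ball_zero_iff.mp hz).le
  have hrem := mul_le_mul_of_nonneg_right
    (hF.higherCoeffSum_le hp (by linarith [hlam.1]) (by linarith [hlam.2])) (sq_nonneg ‖z‖)
  have hdist := abs_le.mp ((abs_norm_sub_norm_le (polyF p a b z) z).trans
    (norm_polyF_sub_self_le hp hF.1 hF.2.1 hz1))
  rw [coeffNorm] at hdist
  constructor <;> linarith [hdist.1, hdist.2]
end

section
/- Let p ≥ 1 be an integer and λ ∈ [0,1]. Let (t_i)_{i∈ℕ} be nonnegative reals with Σ_{i=0}^∞ t_i = 1, and for each i let F_i be a polyharmonic mapping of class HS_p(λ) with coefficients a^{(i)}_{n,k}, b^{(i)}_{n,k} (so a^{(i)}_{1,1} = 1). Then the series Σ_{i=0}^∞ t_i F_i(z) converges for each z ∈ 𝔻, the coefficients A_{n,k} = Σ_{i=0}^∞ t_i a^{(i)}_{n,k} and B_{n,k} = Σ_{i=0}^∞ t_i b^{(i)}_{n,k} converge absolutely with A_{1,1} = 1, the polyharmonic mapping with coefficients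 (A_{n,k}, B_{n,k}) equals z ↦ Σ_{i=0}^∞ t_i F_i(z) on 𝔻, and this mapping belongs to HS_p(λ). That is, the family HS_p(λ) is closed under (countable) convex combinations. -/
/-!
Write `S_{n,k} = |a_{n,k}| + |b_{n,k}|`. The weights `2(k-1) + n(λn + 1 - λ)` are at least `1`
for `n, k ≥ 1` (at `n = 1` the weight is `2k - 1`), so membership in `HS_p(λ)` gives
`Σ_k Σ_{n ≥ 1} S_{n,k} ≤ 2`: every member is bounded by `2` on the closed disk, and so are its
coefficients. With these uniform bounds all the double series `Σ_i Σ_n t_i (⋯)` converge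
absolutely, so the sums over `i` and `n` may be interchanged, and the triangle inequality
`|Σ_i t_i a^{(i)}_{n,k}| ≤ Σ_i t_i |a^{(i)}_{n,k}|` carries each defining inequality of `HS_p(λ)`
over to the combination. The upper bound `< 2` on the first coefficients stays strict because
some `t_i` is positive.
-/

open Complex Metric Set

def polyTerm (a b : ℕ → ℕ → ℂ) (z : ℂ) (k n : ℕ) : ℂ :=
  if 1 ≤ n then a n k * z ^ n + (starRingEnd ℂ) (b n k) * ((starRingEnd ℂ) z) ^ n else 0

-- `HSLam` puts no condition on the coefficients with `n = 0`, so they are left out.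
noncomputable def coeffMass (a b : ℕ → ℕ → ℂ) (k n : ℕ) : ℝ :=
  if 1 ≤ n then ‖a n k‖ + ‖b n k‖ else 0

noncomputable def hsWeight (lam : ℝ) (k n : ℕ) : ℝ :=
  2 * ((k : ℝ) - 1) + n * (lam * n + 1 - lam)

noncomputable def hsTail (lam : ℝ) (a b : ℕ → ℕ → ℂ) (k n : ℕ) : ℝ :=
  if 2 ≤ n then hsWeight lam k n * (‖a n k‖ + ‖b n k‖) else 0

noncomputable def hsHead (p : ℕ) (a b : ℕ → ℕ → ℂ) : ℝ :=
  ∑ k ∈ Finset.Icc 1 p, (2 * (k : ℝ) - 1) * (‖a 1 k‖ + ‖b 1 k‖)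

noncomputable def convexComb (t : ℕ → ℝ) (x : ℕ → ℕ → ℕ → ℂ) (n k : ℕ) : ℂ :=
  ∑' i, (t i : ℂ) * x i n k

section

variable {p : ℕ} {lam : ℝ} {a b : ℕ → ℕ → ℂ}

theorem polyF_eq_sum_tsum_polyTerm (z : ℂ) :
    polyF p a b z =
      ∑ k ∈ Finset.Icc 1 p, (‖z‖ : ℂ) ^ (2 * (k - 1)) * ∑' n, polyTerm a b z k n :=
  rfl

theorem hsLam_iff :
    HSLam p lam a b ↔
      a 1 1 = 1 ∧ (∀ k ∈ Finset.Icc 1 p, Summable fun n => ‖a n k‖ + ‖b n k‖) ∧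
        (∀ k ∈ Finset.Icc 1 p, Summable (hsTail lam a b k)) ∧
        ∑ k ∈ Finset.Icc 1 p, ∑' n, hsTail lam a b k n ≤ 2 - hsHead p a b ∧
        1 ≤ hsHead p a b ∧ hsHead p a b < 2 :=
  Iff.rfl

theorem norm_ofReal_mul_of_nonneg {r : ℝ} (hr : 0 ≤ r) (x : ℂ) : ‖(r : ℂ) * x‖ = r * ‖x‖ := by
  rw [norm_mul, Complex.norm_of_nonneg hr]

theorem zero_le_two_mul_natCast_sub_one {k : ℕ} (hk : 1 ≤ k) : (0 : ℝ) ≤ 2 * k - 1 := by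
  have : (1 : ℝ) ≤ k := by exact_mod_cast hk
  linarith

theorem natCast_le_hsWeight (hlam : 0 ≤ lam) {k n : ℕ} (hk : 1 ≤ k) (hn : 1 ≤ n) :
    (n : ℝ) ≤ hsWeight lam k n := by
  have hk' : (1 : ℝ) ≤ k := by exact_mod_cast hk
  have hn' : (1 : ℝ) ≤ n := by exact_mod_cast hn
  have : 0 ≤ lam * n * (n - 1) := by positivity
  unfold hsWeight
  nlinarith

theorem coeffMass_nonneg (k n : ℕ) : 0 ≤ coeffMass a b k n := by
  unfold coeffMass
  split_ifs <;> positivity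

theorem coeffMass_of_one_le {k n : ℕ} (hn : 1 ≤ n) : coeffMass a b k n = ‖a n k‖ + ‖b n k‖ :=
  if_pos hn

theorem hsTail_nonneg (hlam : 0 ≤ lam) {k : ℕ} (hk : 1 ≤ k) (n : ℕ) : 0 ≤ hsTail lam a b k n := by
  unfold hsTail
  split_ifs with hn
  · exact mul_nonneg ((Nat.cast_nonneg n).trans (natCast_le_hsWeight hlam hk (by omega)))
      (by positivity)
  · exact le_rfl

theorem coeffMass_le_ite_add_hsTail (hlam : 0 ≤ lam) {k : ℕ} (hk : 1 ≤ k) (n : ℕ) :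
    coeffMass a b k n ≤
      (if n = 1 then (2 * (k : ℝ) - 1) * (‖a 1 k‖ + ‖b 1 k‖) else 0) + hsTail lam a b k n := by
  have hS : 0 ≤ ‖a n k‖ + ‖b n k‖ := by positivity
  rcases Nat.lt_or_ge n 2 with hn | hn
  · interval_cases n
    · simp [coeffMass, hsTail]
    · have : (1 : ℝ) ≤ k := by exact_mod_cast hk
      simp only [coeffMass, hsTail, if_pos le_rfl, if_true]
      norm_num
      nlinarith
  · have hw := natCast_le_hsWeight hlam hk (show 1 ≤ n by omega)
    have hn' : (2 : ℝ) ≤ n := by exact_mod_cast hn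
    simp only [coeffMass, hsTail, if_pos hn, if_pos (show 1 ≤ n by omega),
      if_neg (show n ≠ 1 by omega), zero_add]
    nlinarith

theorem norm_polyTerm_le {z : ℂ} (hz : ‖z‖ ≤ 1) (k n : ℕ) :
    ‖polyTerm a b z k n‖ ≤ coeffMass a b k n := by
  unfold polyTerm coeffMass
  split_ifs
  · have hzn : ‖z‖ ^ n ≤ 1 := pow_le_one₀ (norm_nonneg z) hz
    calc _ ≤ ‖a n k * z ^ n‖ + ‖(starRingEnd ℂ) (b n k) * (starRingEnd ℂ) z ^ n‖ :=
          norm_add_le _ _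
      _ = ‖a n k‖ * ‖z‖ ^ n + ‖b n k‖ * ‖z‖ ^ n := by simp
      _ ≤ ‖a n k‖ + ‖b n k‖ :=
          add_le_add (mul_le_of_le_one_right (norm_nonneg _) hzn)
            (mul_le_of_le_one_right (norm_nonneg _) hzn)
  · simp

theorem norm_mul_tsum_polyTerm_le {z : ℂ} (hz : ‖z‖ ≤ 1) {k : ℕ}
    (hs : Summable (coeffMass a b k)) :
    ‖(‖z‖ : ℂ) ^ (2 * (k - 1)) * ∑' n, polyTerm a b z k n‖ ≤ ∑' n, coeffMass a b k n := by
  have hsn : Summable fun n => ‖polyTerm a b z k n‖ :=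
    hs.of_nonneg_of_le (fun _ => norm_nonneg _) (norm_polyTerm_le hz k)
  rw [norm_mul, norm_pow, Complex.norm_of_nonneg (norm_nonneg z)]
  calc _ ≤ 1 * ∑' n, ‖polyTerm a b z k n‖ :=
        mul_le_mul (pow_le_one₀ (norm_nonneg z) hz) (norm_tsum_le_tsum_norm hsn)
          (norm_nonneg _) zero_le_one
    _ ≤ ∑' n, coeffMass a b k n := by
        rw [one_mul]
        exact hsn.tsum_le_tsum (norm_polyTerm_le hz k) hs

theorem norm_polyF_le_sum_tsum_coeffMass {z : ℂ} (hz : ‖z‖ ≤ 1)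
    (hs : ∀ k ∈ Finset.Icc 1 p, Summable (coeffMass a b k)) :
    ‖polyF p a b z‖ ≤ ∑ k ∈ Finset.Icc 1 p, ∑' n, coeffMass a b k n := by
  rw [polyF_eq_sum_tsum_polyTerm]
  exact (norm_sum_le _ _).trans
    (Finset.sum_le_sum fun k hk => norm_mul_tsum_polyTerm_le hz (hs k hk))

theorem one_le_hsHead (hp : 1 ≤ p) (h11 : a 1 1 = 1) : 1 ≤ hsHead p a b := by
  calc (1 : ℝ) ≤ (2 * ((1 : ℕ) : ℝ) - 1) * (‖a 1 1‖ + ‖b 1 1‖) := by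
        rw [h11]
        norm_num
    _ ≤ hsHead p a b :=
        Finset.single_le_sum (f := fun k : ℕ => (2 * (k : ℝ) - 1) * (‖a 1 k‖ + ‖b 1 k‖))
          (fun k hk => mul_nonneg (zero_le_two_mul_natCast_sub_one (Finset.mem_Icc.1 hk).1)
            (by positivity))
          (Finset.mem_Icc.2 ⟨le_rfl, hp⟩)

namespace HSLam

theorem summable_hsTail (h : HSLam p lam a b) {k : ℕ} (hk : k ∈ Finset.Icc 1 p) :
    Summable (hsTail lam a b k) :=
  (hsLam_iff.1 h).2.2.1 k hk

theorem sum_tsum_hsTail_le (h : HSLam p lam a b) :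
    ∑ k ∈ Finset.Icc 1 p, ∑' n, hsTail lam a b k n ≤ 2 - hsHead p a b :=
  (hsLam_iff.1 h).2.2.2.1

theorem hsHead_lt_two (h : HSLam p lam a b) : hsHead p a b < 2 :=
  (hsLam_iff.1 h).2.2.2.2.2

theorem summable_coeffMass (h : HSLam p lam a b) {k : ℕ} (hk : k ∈ Finset.Icc 1 p) :
    Summable (coeffMass a b k) :=
  (h.2.1 k hk).of_nonneg_of_le (coeffMass_nonneg k) fun n => by
    unfold coeffMass
    split_ifs
    · exact le_rfl
    · positivity

theorem sum_tsum_coeffMass_le_two (h : HSLam p lam a b) (hlam : 0 ≤ lam) :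
    ∑ k ∈ Finset.Icc 1 p, ∑' n, coeffMass a b k n ≤ 2 := by
  have hk_le : ∀ k ∈ Finset.Icc 1 p, ∑' n, coeffMass a b k n ≤
      (2 * (k : ℝ) - 1) * (‖a 1 k‖ + ‖b 1 k‖) + ∑' n, hsTail lam a b k n := by
    intro k hk
    have hite := (hasSum_ite_eq 1 ((2 * (k : ℝ) - 1) * (‖a 1 k‖ + ‖b 1 k‖))).summable
    calc _ ≤ ∑' n, ((if n = 1 then (2 * (k : ℝ) - 1) * (‖a 1 k‖ + ‖b 1 k‖) else 0) +
          hsTail lam a b k n) :=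
          (h.summable_coeffMass hk).tsum_le_tsum
            (coeffMass_le_ite_add_hsTail hlam (Finset.mem_Icc.1 hk).1)
            (hite.add (h.summable_hsTail hk))
      _ = _ := by rw [hite.tsum_add (h.summable_hsTail hk), tsum_ite_eq]
  calc _ ≤ ∑ k ∈ Finset.Icc 1 p,
        ((2 * (k : ℝ) - 1) * (‖a 1 k‖ + ‖b 1 k‖) + ∑' n, hsTail lam a b k n) :=
        Finset.sum_le_sum hk_le
    _ = hsHead p a b + ∑ k ∈ Finset.Icc 1 p, ∑' n, hsTail lam a b k n :=
        Finset.sum_add_distrib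
    _ ≤ 2 := by linarith [h.sum_tsum_hsTail_le]

theorem tsum_coeffMass_le_two (h : HSLam p lam a b) (hlam : 0 ≤ lam) {k : ℕ}
    (hk : k ∈ Finset.Icc 1 p) : ∑' n, coeffMass a b k n ≤ 2 :=
  (Finset.single_le_sum (f := fun k => ∑' n, coeffMass a b k n)
    (fun _ _ => tsum_nonneg (coeffMass_nonneg _)) hk).trans (h.sum_tsum_coeffMass_le_two hlam)

theorem coeffMass_le_two (h : HSLam p lam a b) (hlam : 0 ≤ lam) {k : ℕ}
    (hk : k ∈ Finset.Icc 1 p) (n : ℕ) : coeffMass a b k n ≤ 2 :=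
  ((h.summable_coeffMass hk).le_tsum n fun m _ => coeffMass_nonneg k m).trans
    (h.tsum_coeffMass_le_two hlam hk)

theorem tsum_hsTail_le_one (h : HSLam p lam a b) (hlam : 0 ≤ lam) {k : ℕ}
    (hk : k ∈ Finset.Icc 1 p) : ∑' n, hsTail lam a b k n ≤ 1 := by
  have := Finset.single_le_sum (f := fun k => ∑' n, hsTail lam a b k n)
    (fun k hk => tsum_nonneg (hsTail_nonneg hlam (Finset.mem_Icc.1 hk).1)) hk
  linarith [h.sum_tsum_hsTail_le, (hsLam_iff.1 h).2.2.2.2.1]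

theorem norm_polyF_le_two (h : HSLam p lam a b) (hlam : 0 ≤ lam) {z : ℂ} (hz : ‖z‖ ≤ 1) :
    ‖polyF p a b z‖ ≤ 2 :=
  (norm_polyF_le_sum_tsum_coeffMass hz fun _ hk => h.summable_coeffMass hk).trans
    (h.sum_tsum_coeffMass_le_two hlam)

end HSLam

section DoubleSeries

variable {ι κ : Type*} {t : ι → ℝ}

theorem summable_prod_mul_of_tsum_le {f : ι → κ → ℝ} {M : ℝ} (ht : ∀ i, 0 ≤ t i)
    (hts : Summable t) (hf : ∀ i n, 0 ≤ f i n) (hfs : ∀ i, Summable (f i))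
    (hM : ∀ i, ∑' n, f i n ≤ M) :
    Summable fun q : ι × κ => t q.1 * f q.1 q.2 := by
  refine (summable_prod_of_nonneg fun q => mul_nonneg (ht _) (hf _ _)).2
    ⟨fun i => (hfs i).mul_left (t i), ?_⟩
  refine (hts.mul_right M).of_nonneg_of_le
    (fun i => tsum_nonneg fun n => mul_nonneg (ht i) (hf i n)) fun i => ?_
  change ∑' n, t i * f i n ≤ t i * M
  rw [tsum_mul_left]
  exact mul_le_mul_of_nonneg_left (hM i) (ht i)

theorem summable_and_tsum_le_of_le_tsum_mul {f : ι → κ → ℝ} {g : κ → ℝ} {M : ℝ}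
    (ht : ∀ i, 0 ≤ t i) (hts : Summable t) (hf : ∀ i n, 0 ≤ f i n) (hfs : ∀ i, Summable (f i))
    (hM : ∀ i, ∑' n, f i n ≤ M) (hg : ∀ n, 0 ≤ g n) (hgf : ∀ n, g n ≤ ∑' i, t i * f i n) :
    Summable g ∧ ∑' n, g n ≤ ∑' i, t i * ∑' n, f i n := by
  have hprod := summable_prod_mul_of_tsum_le ht hts hf hfs hM
  have hcol : Summable fun n => ∑' i, t i * f i n := hprod.prod_symm.prod
  have hgs : Summable g := hcol.of_nonneg_of_le hg hgf
  refine ⟨hgs, ?_⟩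
  calc ∑' n, g n ≤ ∑' n, ∑' i, t i * f i n := hgs.tsum_le_tsum hgf hcol
    _ = ∑' i, ∑' n, t i * f i n := hprod.tsum_comm
    _ = ∑' i, t i * ∑' n, f i n := tsum_congr fun i => tsum_mul_left

theorem summable_mul_of_abs_le {x : ι → ℝ} {M : ℝ} (ht : ∀ i, 0 ≤ t i) (hts : Summable t)
    (hx : ∀ i, |x i| ≤ M) : Summable fun i => t i * x i :=
  (hts.mul_right M).of_norm_bounded fun i => by
    rw [Real.norm_eq_abs, abs_mul, abs_of_nonneg (ht i)]
    exact mul_le_mul_of_nonneg_left (hx i) (ht i)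

theorem summable_ofReal_mul_of_norm_le {x : ι → ℂ} {M : ℝ} (ht : ∀ i, 0 ≤ t i)
    (hts : Summable t) (hx : ∀ i, ‖x i‖ ≤ M) : Summable fun i => (t i : ℂ) * x i :=
  (hts.mul_right M).of_norm_bounded fun i => by
    rw [norm_ofReal_mul_of_nonneg (ht i)]
    exact mul_le_mul_of_nonneg_left (hx i) (ht i)

theorem norm_tsum_ofReal_mul_le {x : ι → ℂ} (ht : ∀ i, 0 ≤ t i)
    (hs : Summable fun i => t i * ‖x i‖) : ‖∑' i, (t i : ℂ) * x i‖ ≤ ∑' i, t i * ‖x i‖ := by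
  simp_rw [← norm_ofReal_mul_of_nonneg (ht _)] at hs ⊢
  exact norm_tsum_le_tsum_norm hs

end DoubleSeries

section ConvexCombination

variable {t : ℕ → ℝ} {aa bb : ℕ → ℕ → ℕ → ℂ}

theorem convexComb_one_one (htsum : HasSum t 1) (hF : ∀ i, HSLam p lam (aa i) (bb i)) :
    convexComb t aa 1 1 = 1 := by
  simp only [convexComb, (hF _).1, mul_one]
  rw [← Complex.ofReal_tsum, htsum.tsum_eq, Complex.ofReal_one]

theorem summable_norm_ofReal_mul_coeff (ht : ∀ i, 0 ≤ t i) (hts : Summable t)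
    (hF : ∀ i, HSLam p lam (aa i) (bb i)) (hlam : 0 ≤ lam) {k n : ℕ}
    (hk : k ∈ Finset.Icc 1 p) (hn : 1 ≤ n) :
    (Summable fun i => ‖(t i : ℂ) * aa i n k‖) ∧ Summable fun i => ‖(t i : ℂ) * bb i n k‖ := by
  have hmass := fun i => (hF i).coeffMass_le_two hlam hk n
  simp only [coeffMass_of_one_le hn] at hmass
  simp only [norm_ofReal_mul_of_nonneg (ht _)]
  exact ⟨summable_mul_of_abs_le (M := 2) ht hts fun i => by
      rw [abs_norm]; linarith [hmass i, norm_nonneg (bb i n k)],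
    summable_mul_of_abs_le (M := 2) ht hts fun i => by
      rw [abs_norm]; linarith [hmass i, norm_nonneg (aa i n k)]⟩

theorem coeffMass_convexComb_le (ht : ∀ i, 0 ≤ t i) (hts : Summable t)
    (hF : ∀ i, HSLam p lam (aa i) (bb i)) (hlam : 0 ≤ lam) {k : ℕ}
    (hk : k ∈ Finset.Icc 1 p) (n : ℕ) :
    coeffMass (convexComb t aa) (convexComb t bb) k n ≤
      ∑' i, t i * coeffMass (aa i) (bb i) k n := by
  by_cases hn : 1 ≤ n
  · obtain ⟨ha, hb⟩ := summable_norm_ofReal_mul_coeff ht hts hF hlam hk hn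
    simp only [norm_ofReal_mul_of_nonneg (ht _)] at ha hb
    simp only [coeffMass_of_one_le hn, mul_add]
    rw [ha.tsum_add hb]
    exact add_le_add (norm_tsum_ofReal_mul_le ht ha) (norm_tsum_ofReal_mul_le ht hb)
  · simp [coeffMass, hn]

theorem hsTail_convexComb_le (ht : ∀ i, 0 ≤ t i) (hts : Summable t)
    (hF : ∀ i, HSLam p lam (aa i) (bb i)) (hlam : 0 ≤ lam) {k : ℕ}
    (hk : k ∈ Finset.Icc 1 p) (n : ℕ) :
    hsTail lam (convexComb t aa) (convexComb t bb) k n ≤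
      ∑' i, t i * hsTail lam (aa i) (bb i) k n := by
  unfold hsTail
  split_ifs with hn
  · have hmass := coeffMass_convexComb_le ht hts hF hlam hk n
    simp only [coeffMass_of_one_le (show 1 ≤ n by omega)] at hmass
    have hw := (Nat.cast_nonneg n).trans
      (natCast_le_hsWeight hlam (Finset.mem_Icc.1 hk).1 (show 1 ≤ n by omega))
    calc _ ≤ hsWeight lam k n * ∑' i, t i * (‖aa i n k‖ + ‖bb i n k‖) :=
          mul_le_mul_of_nonneg_left hmass hw
      _ = _ := by
          rw [← tsum_mul_left]
          exact tsum_congr fun i => by ring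
  · simp

theorem hsHead_convexComb_le (ht : ∀ i, 0 ≤ t i) (hts : Summable t)
    (hF : ∀ i, HSLam p lam (aa i) (bb i)) (hlam : 0 ≤ lam) :
    hsHead p (convexComb t aa) (convexComb t bb) ≤ ∑' i, t i * hsHead p (aa i) (bb i) := by
  have hs : ∀ k ∈ Finset.Icc 1 p,
      Summable fun i => (2 * (k : ℝ) - 1) * (t i * coeffMass (aa i) (bb i) k 1) :=
    fun k hk => (summable_mul_of_abs_le ht hts fun i => by
      rw [abs_of_nonneg (coeffMass_nonneg k 1)]
      exact (hF i).coeffMass_le_two hlam hk 1).mul_left _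
  calc _ ≤ ∑ k ∈ Finset.Icc 1 p,
        ∑' i, (2 * (k : ℝ) - 1) * (t i * coeffMass (aa i) (bb i) k 1) := by
        refine Finset.sum_le_sum fun k hk => ?_
        rw [tsum_mul_left, ← coeffMass_of_one_le le_rfl]
        exact mul_le_mul_of_nonneg_left (coeffMass_convexComb_le ht hts hF hlam hk 1)
          (zero_le_two_mul_natCast_sub_one (Finset.mem_Icc.1 hk).1)
    _ = ∑' i, t i * hsHead p (aa i) (bb i) := by
        rw [← Summable.tsum_finsetSum hs]
        refine tsum_congr fun i => ?_
        simp only [hsHead, Finset.mul_sum, coeffMass_of_one_le le_rfl]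
        exact Finset.sum_congr rfl fun k _ => by ring

theorem summable_coeffMass_convexComb (ht : ∀ i, 0 ≤ t i) (hts : Summable t)
    (hF : ∀ i, HSLam p lam (aa i) (bb i)) (hlam : 0 ≤ lam) {k : ℕ}
    (hk : k ∈ Finset.Icc 1 p) : Summable (coeffMass (convexComb t aa) (convexComb t bb) k) :=
  (summable_and_tsum_le_of_le_tsum_mul ht hts (fun _ => coeffMass_nonneg k)
    (fun i => (hF i).summable_coeffMass hk) (fun i => (hF i).tsum_coeffMass_le_two hlam hk)
    (coeffMass_nonneg k) (coeffMass_convexComb_le ht hts hF hlam hk)).1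

theorem summable_hsTail_convexComb_and_tsum_le (ht : ∀ i, 0 ≤ t i) (hts : Summable t)
    (hF : ∀ i, HSLam p lam (aa i) (bb i)) (hlam : 0 ≤ lam) {k : ℕ}
    (hk : k ∈ Finset.Icc 1 p) :
    Summable (hsTail lam (convexComb t aa) (convexComb t bb) k) ∧
      ∑' n, hsTail lam (convexComb t aa) (convexComb t bb) k n ≤
        ∑' i, t i * ∑' n, hsTail lam (aa i) (bb i) k n :=
  summable_and_tsum_le_of_le_tsum_mul ht hts
    (fun _ => hsTail_nonneg hlam (Finset.mem_Icc.1 hk).1) (fun i => (hF i).summable_hsTail hk)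
    (fun i => (hF i).tsum_hsTail_le_one hlam hk) (hsTail_nonneg hlam (Finset.mem_Icc.1 hk).1)
    (hsTail_convexComb_le ht hts hF hlam hk)

theorem polyTerm_convexComb (ht : ∀ i, 0 ≤ t i) (hts : Summable t)
    (hF : ∀ i, HSLam p lam (aa i) (bb i)) (hlam : 0 ≤ lam) {k : ℕ}
    (hk : k ∈ Finset.Icc 1 p) (z : ℂ) (n : ℕ) :
    polyTerm (convexComb t aa) (convexComb t bb) z k n =
      ∑' i, (t i : ℂ) * polyTerm (aa i) (bb i) z k n := by
  by_cases hn : 1 ≤ n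
  · obtain ⟨ha, hb⟩ := summable_norm_ofReal_mul_coeff ht hts hF hlam hk hn
    simp only [polyTerm, if_pos hn, convexComb]
    rw [Complex.conj_tsum, ← tsum_mul_right, ← tsum_mul_right,
      ← (ha.of_norm.mul_right _).tsum_add ((Complex.summable_conj.2 hb.of_norm).mul_right _)]
    refine tsum_congr fun i => ?_
    simp only [map_mul, Complex.conj_ofReal]
    ring
  · simp [polyTerm, hn]

theorem tsum_polyTerm_convexComb (ht : ∀ i, 0 ≤ t i) (hts : Summable t)
    (hF : ∀ i, HSLam p lam (aa i) (bb i)) (hlam : 0 ≤ lam) {k : ℕ}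
    (hk : k ∈ Finset.Icc 1 p) {z : ℂ} (hz : ‖z‖ ≤ 1) :
    ∑' n, polyTerm (convexComb t aa) (convexComb t bb) z k n =
      ∑' i, (t i : ℂ) * ∑' n, polyTerm (aa i) (bb i) z k n := by
  have hprod := summable_prod_mul_of_tsum_le ht hts (fun _ => coeffMass_nonneg k)
    (fun i => (hF i).summable_coeffMass hk) (fun i => (hF i).tsum_coeffMass_le_two hlam hk)
  have hsum : Summable (Function.uncurry fun i n => (t i : ℂ) * polyTerm (aa i) (bb i) z k n) :=
    hprod.of_norm_bounded fun q => by
      change ‖(t q.1 : ℂ) * _‖ ≤ _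
      rw [norm_ofReal_mul_of_nonneg (ht _)]
      exact mul_le_mul_of_nonneg_left (norm_polyTerm_le hz k _) (ht _)
  calc _ = ∑' n, ∑' i, (t i : ℂ) * polyTerm (aa i) (bb i) z k n :=
        tsum_congr (polyTerm_convexComb ht hts hF hlam hk z)
    _ = ∑' i, ∑' n, (t i : ℂ) * polyTerm (aa i) (bb i) z k n := hsum.tsum_comm
    _ = _ := tsum_congr fun i => tsum_mul_left

theorem polyF_convexComb (ht : ∀ i, 0 ≤ t i) (hts : Summable t)
    (hF : ∀ i, HSLam p lam (aa i) (bb i)) (hlam : 0 ≤ lam) {z : ℂ} (hz : ‖z‖ ≤ 1) :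
    polyF p (convexComb t aa) (convexComb t bb) z = ∑' i, (t i : ℂ) * polyF p (aa i) (bb i) z := by
  have hs : ∀ k ∈ Finset.Icc 1 p, Summable fun i =>
      (t i : ℂ) * ((‖z‖ : ℂ) ^ (2 * (k - 1)) * ∑' n, polyTerm (aa i) (bb i) z k n) :=
    fun k hk => summable_ofReal_mul_of_norm_le ht hts fun i =>
      (norm_mul_tsum_polyTerm_le hz ((hF i).summable_coeffMass hk)).trans
        ((hF i).tsum_coeffMass_le_two hlam hk)
  simp only [polyF_eq_sum_tsum_polyTerm, Finset.mul_sum]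
  rw [Summable.tsum_finsetSum hs]
  refine Finset.sum_congr rfl fun k hk => ?_
  rw [tsum_polyTerm_convexComb ht hts hF hlam hk hz, ← tsum_mul_left]
  exact tsum_congr fun i => by ring

theorem summable_of_summable_coeffMass {k : ℕ} (h : Summable (coeffMass a b k)) :
    Summable fun n => ‖a n k‖ + ‖b n k‖ := by
  rw [← summable_nat_add_iff 1] at h ⊢
  simpa only [coeffMass_of_one_le (Nat.le_add_left 1 _)] using h

theorem HSLam.convexComb (hp : 1 ≤ p) (hlam : 0 ≤ lam) (ht : ∀ i, 0 ≤ t i)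
    (htsum : HasSum t 1) (hF : ∀ i, HSLam p lam (aa i) (bb i)) :
    HSLam p lam (convexComb t aa) (convexComb t bb) := by
  have hts := htsum.summable
  have h11 := convexComb_one_one htsum hF
  have htail := fun k (hk : k ∈ Finset.Icc 1 p) =>
    summable_hsTail_convexComb_and_tsum_le ht hts hF hlam hk
  have hhead : Summable fun i => t i * hsHead p (aa i) (bb i) :=
    summable_mul_of_abs_le (M := 2) ht hts fun i => abs_le.2
      ⟨by linarith [one_le_hsHead (b := bb i) hp (hF i).1], (hF i).hsHead_lt_two.le⟩
  refine hsLam_iff.2 ⟨h11, fun k hk => summable_of_summable_coeffMass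
    (summable_coeffMass_convexComb ht hts hF hlam hk), fun k hk => (htail k hk).1, ?_,
    one_le_hsHead hp h11, ?_⟩
  · have hsum_tail : ∀ k ∈ Finset.Icc 1 p,
        Summable fun i => t i * ∑' n, hsTail lam (aa i) (bb i) k n :=
      fun k hk => summable_mul_of_abs_le (M := 1) ht hts fun i => by
        rw [abs_of_nonneg (tsum_nonneg (hsTail_nonneg hlam (Finset.mem_Icc.1 hk).1))]
        exact (hF i).tsum_hsTail_le_one hlam hk
    have hswap : ∑ k ∈ Finset.Icc 1 p, ∑' i, t i * ∑' n, hsTail lam (aa i) (bb i) k n =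
        ∑' i, t i * ∑ k ∈ Finset.Icc 1 p, ∑' n, hsTail lam (aa i) (bb i) k n := by
      simp only [Finset.mul_sum]
      exact (Summable.tsum_finsetSum hsum_tail).symm
    calc _ ≤ ∑ k ∈ Finset.Icc 1 p, ∑' i, t i * ∑' n, hsTail lam (aa i) (bb i) k n :=
          Finset.sum_le_sum fun k hk => (htail k hk).2
      _ ≤ ∑' i, (t i * 2 - t i * hsHead p (aa i) (bb i)) := by
          rw [hswap]
          refine Summable.tsum_le_tsum (fun i => ?_) ?_ ((hts.mul_right 2).sub hhead)
          · rw [← mul_sub]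
            exact mul_le_mul_of_nonneg_left (hF i).sum_tsum_hsTail_le (ht i)
          · simpa only [Finset.mul_sum] using summable_sum hsum_tail
      _ = 2 - ∑' i, t i * hsHead p (aa i) (bb i) := by
          rw [(hts.mul_right 2).tsum_sub hhead, tsum_mul_right, htsum.tsum_eq, one_mul]
      _ ≤ _ := by linarith [hsHead_convexComb_le ht hts hF hlam]
  · have ht0 : t ≠ 0 := by
      rintro rfl
      exact one_ne_zero (htsum.unique hasSum_zero)
    obtain ⟨i₀, hi₀⟩ := Function.ne_iff.1 ht0
    calc _ ≤ ∑' i, t i * hsHead p (aa i) (bb i) := hsHead_convexComb_le ht hts hF hlam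
      _ < ∑' i, t i * 2 :=
          hhead.tsum_lt_tsum (i := i₀)
            (fun i => mul_le_mul_of_nonneg_left (hF i).hsHead_lt_two.le (ht i))
            (mul_lt_mul_of_pos_left (hF i₀).hsHead_lt_two ((ht i₀).lt_of_ne' hi₀))
            (hts.mul_right 2)
      _ = 2 := by rw [tsum_mul_right, htsum.tsum_eq, one_mul]

end ConvexCombination

end

/-- The family `HS_p(λ)` is closed under countable convex combinations. -/
theorem closed_under_convex_combinations
    (p : ℕ) (hp : 1 ≤ p) (lam : ℝ) (hlam : lam ∈ Set.Icc (0 : ℝ) 1)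
    (t : ℕ → ℝ) (ht : ∀ i, 0 ≤ t i) (htsum : HasSum t 1)
    (aa bb : ℕ → ℕ → ℕ → ℂ) (hF : ∀ i, HSLam p lam (aa i) (bb i)) :
    (∀ z ∈ Metric.ball (0 : ℂ) 1,
      Summable (fun i : ℕ => (t i : ℂ) * polyF p (aa i) (bb i) z)) ∧
    (∀ n k : ℕ, 1 ≤ n → 1 ≤ k → k ≤ p →
      Summable (fun i : ℕ => ‖(t i : ℂ) * aa i n k‖) ∧
      Summable (fun i : ℕ => ‖(t i : ℂ) * bb i n k‖)) ∧
    (∑' i : ℕ, (t i : ℂ) * aa i 1 1) = 1 ∧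
    (∀ z ∈ Metric.ball (0 : ℂ) 1,
      polyF p (fun n k => ∑' i : ℕ, (t i : ℂ) * aa i n k)
        (fun n k => ∑' i : ℕ, (t i : ℂ) * bb i n k) z
        = ∑' i : ℕ, (t i : ℂ) * polyF p (aa i) (bb i) z) ∧
    HSLam p lam (fun n k => ∑' i : ℕ, (t i : ℂ) * aa i n k)
      (fun n k => ∑' i : ℕ, (t i : ℂ) * bb i n k) := by
  have hts := htsum.summable
  have hdisk : ∀ z ∈ Metric.ball (0 : ℂ) 1, ‖z‖ ≤ 1 := fun z hz => (mem_ball_zero_iff.1 hz).le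
  exact ⟨fun z hz => summable_ofReal_mul_of_norm_le ht hts fun i =>
      (hF i).norm_polyF_le_two hlam.1 (hdisk z hz),
    fun n k hn hk hkp => summable_norm_ofReal_mul_coeff ht hts hF hlam.1 (Finset.mem_Icc.2 ⟨hk, hkp⟩) hn,
    convexComb_one_one htsum hF,
    fun z hz => polyF_convexComb ht hts hF hlam.1 (hdisk z hz),
    HSLam.convexComb hp hlam.1 ht htsum hF⟩
end
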